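/- Fix W ∈ ℂ^{N_BS×N_d} with W ≠ 0 and set V = A_G ( I ∘ (Λ B_G^H W W^H B_G) ) A_G^H ∈ ℂ^{M×M}. The function θ ↦ J(W, θ) is ℝ-Fréchet differentiable at every θ ∈ ℂ^M, and its conjugate Wirtinger gradient at θ equals the vector of diagonal entries of (2 M² N_BS / ‖W‖_F²) · Ã^H Γ² Diag(ȳ − f) Ã Θ V, where Θ = diagonal(θ) and ȳ = ȳ(W, θ); that is, for every direction v ∈ ℂ^M, the Fréchet derivative of J(W, ·) at θ in direction v equals 2 Re ( v^H g ) where g is that vector of diagonal entries. -/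

import Mathlib

/-!
Write `P = A_G (I ∘ (Λ B_Gᴴ W Wᴴ B_G)) A_Gᴴ`; it is Hermitian because `I ∘ X` keeps only the
diagonal of `X`, which is real here. The `j`-th pattern entry is `c · Re (x_j ⬝ P x̄_j)` for the
row `x_j = Ã_j ∘ θ` and `c = M² N_BS / ‖W‖_F²`, and for Hermitian `P` the derivative of
`x ↦ Re (x ⬝ P x̄)` in direction `u` is `2 Re (u ⬝ P x̄)`. The chain rule through the squared
residuals of `J` gives a sum over `j` which, after exchanging the order of summation, is
`Re (v̄ ⬝ diag (Ãᴴ Γ² Diag(ȳ - f) Ã Θ P))`.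
-/

open Matrix

attribute [local instance] Matrix.normedAddCommGroup Matrix.normedSpace

/-- Squared Frobenius norm of a complex matrix. -/
noncomputable def frobSq {m n : Type*} [Fintype m] [Fintype n]
    (W : Matrix m n ℂ) : ℝ :=
  ∑ i, ∑ j, Complex.normSq (W i j)

/-- The normalized average power pattern
`ȳ(W,θ) = diag( (M² N_BS/‖W‖_F²) · Ã Θ A_G ( I ∘ (Λ B_Gᴴ W Wᴴ B_G) ) A_Gᴴ Θᴴ Ãᴴ )`
(the diagonal entries are real; we take their real parts). -/
noncomputable def ybar (M NBS Nd L κM : ℕ)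
    (AG : Matrix (Fin M) (Fin L) ℂ) (BG : Matrix (Fin NBS) (Fin L) ℂ)
    (Atil : Matrix (Fin κM) (Fin M) ℂ) (Λ : Fin L → ℝ)
    (W : Matrix (Fin NBS) (Fin Nd) ℂ) (θ : Fin M → ℂ) : Fin κM → ℝ :=
  fun j =>
    ((M : ℝ) ^ 2 * NBS / frobSq W) *
      ((Atil * Matrix.diagonal θ * AG *
          Matrix.hadamard 1
            (Matrix.diagonal (fun l => (Λ l : ℂ)) * BGᴴ * W * Wᴴ * BG) *
          AGᴴ * (Matrix.diagonal θ)ᴴ * Atilᴴ) j j).re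

/-- The weighted pattern-synthesis cost `J(W,θ) = ‖Γ (f − ȳ(W,θ))‖₂²`, with
`Γ = Diag(γ)`. -/
noncomputable def costJ (M NBS Nd L κM : ℕ)
    (AG : Matrix (Fin M) (Fin L) ℂ) (BG : Matrix (Fin NBS) (Fin L) ℂ)
    (Atil : Matrix (Fin κM) (Fin M) ℂ) (Λ : Fin L → ℝ)
    (γ : Fin κM → ℝ) (f : Fin κM → ℝ)
    (W : Matrix (Fin NBS) (Fin Nd) ℂ) (θ : Fin M → ℂ) : ℝ :=
  ∑ j, (γ j * (f j - ybar M NBS Nd L κM AG BG Atil Λ W θ j)) ^ 2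

open Complex

section

variable {n : Type*} [Fintype n]

theorem isHermitian_one_hadamard_diagonal_mul [DecidableEq n] (d : n → ℝ)
    {X : Matrix n n ℂ} (hX : X.IsHermitian) :
    (1 ⊙ (diagonal (fun i => (d i : ℂ)) * X)).IsHermitian := by
  rw [one_hadamard]
  refine isHermitian_diagonal_of_self_adjoint _ (funext fun i => ?_)
  simp [diagonal_mul, hX.apply i i]

theorem mul_diagonal_mul_mul_conjTranspose_apply_self {m α : Type*} [CommRing α] [StarRing α]
    [DecidableEq n] (A : Matrix m n α) (θ : n → α) (Q : Matrix n n α) (j : m) :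
    (A * diagonal θ * Q * (diagonal θ)ᴴ * Aᴴ) j j = (A j * θ) ⬝ᵥ Q *ᵥ star (A j * θ) := by
  rw [Matrix.mul_assoc _ (diagonal θ)ᴴ, ← conjTranspose_mul]
  simp only [mul_apply, conjTranspose_apply, diagonal_apply, mul_ite, mul_zero,
    Finset.sum_ite_eq', Finset.mem_univ, if_true, dotProduct, mulVec, Pi.mul_apply, Pi.star_apply,
    star_mul', Finset.sum_mul, Finset.mul_sum]
  refine Finset.sum_comm.trans (Finset.sum_congr rfl fun _ _ => Finset.sum_congr rfl fun _ _ => ?_)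
  ring

theorem Matrix.IsHermitian.re_dotProduct_mulVec_star_comm {P : Matrix n n ℂ}
    (hP : P.IsHermitian) (x y : n → ℂ) :
    (x ⬝ᵥ P *ᵥ star y).re = (y ⬝ᵥ P *ᵥ star x).re := by
  rw [← conj_re]
  congr 1
  rw [← star_def, dotProduct_mulVec, ← star_dotProduct_star, star_vecMul, star_star, hP.eq]

theorem Matrix.IsHermitian.hasFDerivAt_re_dotProduct_mulVec_star {P : Matrix n n ℂ}
    (hP : P.IsHermitian) (x : n → ℂ) :
    ∃ D : (n → ℂ) →L[ℝ] ℝ, HasFDerivAt (fun x => (x ⬝ᵥ P *ᵥ star x).re) D x ∧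
      ∀ v, D v = 2 * (v ⬝ᵥ P *ᵥ star x).re := by
  have hq := HasFDerivAt.fun_sum (u := Finset.univ) fun i _ => (hasFDerivAt_apply i x).mul
    (HasFDerivAt.fun_sum (u := Finset.univ) fun k _ =>
      ((hasFDerivAt_apply (𝕜 := ℝ) k x).star).const_mul (P i k))
  refine ⟨reCLM.comp _, reCLM.hasFDerivAt.comp x hq, fun v => ?_⟩
  calc _ = (x ⬝ᵥ P *ᵥ star v + v ⬝ᵥ P *ᵥ star x).re := by
        simp [dotProduct, mulVec, Finset.sum_add_distrib, mul_comm]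
    _ = 2 * (v ⬝ᵥ P *ᵥ star x).re := by
        rw [add_re, hP.re_dotProduct_mulVec_star_comm x v]; ring

theorem Matrix.IsHermitian.sum_mul_re_dotProduct_mulVec_star_eq {κ : Type*} [Fintype κ]
    [DecidableEq n] [DecidableEq κ] {P : Matrix n n ℂ} (hP : P.IsHermitian) (A : Matrix κ n ℂ)
    (g : κ → ℝ) (θ v : n → ℂ) :
    ∑ j, g j * ((A j * v) ⬝ᵥ P *ᵥ star (A j * θ)).re =
      (∑ m, starRingEnd ℂ (v m) *
        (Aᴴ * diagonal (fun j => (g j : ℂ)) * A * diagonal θ * P) m m).re := by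
  simp only [hP.re_dotProduct_mulVec_star_comm (A _ * v), ← re_ofReal_mul, ← re_sum]
  congr 1
  simp only [mul_apply, conjTranspose_apply, diagonal_apply, mul_ite, mul_zero, Finset.sum_ite_eq',
    Finset.mem_univ, if_true, dotProduct, mulVec, Pi.mul_apply, Pi.star_apply, star_mul',
    Finset.sum_mul, Finset.mul_sum, starRingEnd_apply]
  refine (Finset.sum_congr rfl fun _ _ => Finset.sum_comm).trans ?_
  rw [Finset.sum_comm]
  refine Finset.sum_congr rfl fun _ _ => Finset.sum_comm.trans
    (Finset.sum_congr rfl fun _ _ => Finset.sum_congr rfl fun _ _ => ?_)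
  ring

end

theorem hasFDerivAt_sum_sq_mul_sub {E ι : Type*} [NormedAddCommGroup E] [NormedSpace ℝ E]
    [Fintype ι] {y : E → ι → ℝ} {Dy : ι → E →L[ℝ] ℝ} {x : E}
    (hy : ∀ j, HasFDerivAt (fun x => y x j) (Dy j) x) (γ f : ι → ℝ) :
    HasFDerivAt (fun x => ∑ j, (γ j * (f j - y x j)) ^ 2)
      (∑ j, (2 * γ j ^ 2 * (y x j - f j)) • Dy j) x := by
  refine HasFDerivAt.fun_sum fun j _ => ?_
  refine ((((hy j).const_sub (f j)).const_mul (γ j)).pow 2).congr_fderiv ?_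
  ext v
  simp only [Nat.add_one_sub_one, pow_one, nsmul_eq_mul, Nat.cast_ofNat, smul_neg,
    _root_.neg_apply, _root_.smul_apply, smul_eq_mul]
  ring

theorem isHermitian_mul_one_hadamard_mul_conjTranspose {m p q r : Type*} [Fintype p] [Fintype q]
    [Fintype r] [DecidableEq p] (A : Matrix m p ℂ) (B : Matrix q p ℂ) (d : p → ℝ)
    (W : Matrix q r ℂ) :
    (A * (1 ⊙ (diagonal (fun l => (d l : ℂ)) * Bᴴ * W * Wᴴ * B)) * Aᴴ).IsHermitian := by
  have h := isHermitian_one_hadamard_diagonal_mul d (isHermitian_mul_conjTranspose_self (Bᴴ * W))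
  simp only [conjTranspose_mul, conjTranspose_conjTranspose, ← Matrix.mul_assoc] at h
  exact isHermitian_mul_mul_conjTranspose A h

theorem ybar_eq_re_dotProduct_mulVec_star (M NBS Nd L κM : ℕ)
    (AG : Matrix (Fin M) (Fin L) ℂ) (BG : Matrix (Fin NBS) (Fin L) ℂ)
    (Atil : Matrix (Fin κM) (Fin M) ℂ) (Λ : Fin L → ℝ)
    (W : Matrix (Fin NBS) (Fin Nd) ℂ) (θ : Fin M → ℂ) (j : Fin κM) :
    ybar M NBS Nd L κM AG BG Atil Λ W θ j = (M : ℝ) ^ 2 * NBS / frobSq W *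
      ((Atil j * θ) ⬝ᵥ (AG * (1 ⊙ (diagonal (fun l => (Λ l : ℂ)) * BGᴴ * W * Wᴴ * BG)) * AGᴴ) *ᵥ
        star (Atil j * θ)).re := by
  rw [← mul_diagonal_mul_mul_conjTranspose_apply_self]
  simp only [ybar, Matrix.mul_assoc]

theorem stmt2_general (M NBS Nd L κM : ℕ)
    (AG : Matrix (Fin M) (Fin L) ℂ) (BG : Matrix (Fin NBS) (Fin L) ℂ)
    (Atil : Matrix (Fin κM) (Fin M) ℂ) (Λ : Fin L → ℝ)
    (γ : Fin κM → ℝ) (f : Fin κM → ℝ)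
    (W : Matrix (Fin NBS) (Fin Nd) ℂ)
    (θ : Fin M → ℂ) :
    ∃ D : (Fin M → ℂ) →L[ℝ] ℝ,
      HasFDerivAt (fun θ' : Fin M → ℂ => costJ M NBS Nd L κM AG BG Atil Λ γ f W θ') D θ ∧
        ∀ v : Fin M → ℂ,
          D v =
            2 * (∑ m : Fin M, (starRingEnd ℂ) (v m) *
              Matrix.diag
                ((2 * (M : ℝ) ^ 2 * NBS / frobSq W) •
                  (Atilᴴ * Matrix.diagonal (fun j => ((γ j) ^ 2 : ℂ)) *
                    Matrix.diagonal
                      (fun j => ((ybar M NBS Nd L κM AG BG Atil Λ W θ j - f j : ℝ) : ℂ)) *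
                    Atil * Matrix.diagonal θ *
                    (AG *
                      Matrix.hadamard 1
                        (Matrix.diagonal (fun l => (Λ l : ℂ)) * BGᴴ * W * Wᴴ * BG) *
                      AGᴴ))) m).re := by
  set c : ℝ := (M : ℝ) ^ 2 * NBS / frobSq W
  set P := AG * (1 ⊙ (diagonal (fun l => (Λ l : ℂ)) * BGᴴ * W * Wᴴ * BG)) * AGᴴ
  set y := ybar M NBS Nd L κM AG BG Atil Λ W
  have hP : P.IsHermitian := isHermitian_mul_one_hadamard_mul_conjTranspose AG BG Λ W
  choose D hD hD_apply using fun j => hP.hasFDerivAt_re_dotProduct_mulVec_star (Atil j * θ)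
  have hy_deriv : ∀ j, HasFDerivAt (fun θ' => y θ' j)
      (c • (D j).comp (Atil j • ContinuousLinearMap.id ℝ (Fin M → ℂ))) θ := fun j => by
    simp only [y, ybar_eq_re_dotProduct_mulVec_star]
    exact ((hD j).comp θ ((hasFDerivAt_id θ).const_mul (Atil j))).const_mul c
  refine ⟨_, hasFDerivAt_sum_sq_mul_sub hy_deriv γ f, fun v => ?_⟩
  have hweights : Atilᴴ * diagonal (fun j => ((γ j) ^ 2 : ℂ)) *
      diagonal (fun j => ((y θ j - f j : ℝ) : ℂ)) =
        Atilᴴ * diagonal (fun j => ((γ j ^ 2 * (y θ j - f j) : ℝ) : ℂ)) := by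
    rw [Matrix.mul_assoc, diagonal_mul_diagonal]
    push_cast
    rfl
  rw [hweights, show 2 * (M : ℝ) ^ 2 * NBS / frobSq W = 2 * c by ring]
  calc _ = 4 * c * ∑ j, γ j ^ 2 * (y θ j - f j) *
          ((Atil j * v) ⬝ᵥ P *ᵥ star (Atil j * θ)).re := by
        simp only [_root_.sum_apply, _root_.smul_apply, ContinuousLinearMap.comp_apply,
          ContinuousLinearMap.id_apply, hD_apply, smul_eq_mul, Finset.mul_sum]
        exact Finset.sum_congr rfl fun _ _ => by ring
    _ = _ := by
        simp only [hP.sum_mul_re_dotProduct_mulVec_star_eq, diag_apply, Matrix.smul_apply,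
          mul_smul_comm, ← Finset.smul_sum, smul_re, smul_eq_mul]
        ring

/-- For fixed `W ≠ 0` and `V = A_G ( I ∘ (Λ B_Gᴴ W Wᴴ B_G) ) A_Gᴴ`,
the map `θ ↦ J(W,θ)` is ℝ-Fréchet differentiable at every `θ`, with conjugate Wirtinger
gradient equal to the diagonal of `(2M²N_BS/‖W‖_F²) Ãᴴ Γ² Diag(ȳ−f) Ã Θ V`, i.e. the
derivative in direction `v` equals `2 Re (vᴴ g)` with `g` that diagonal. -/
theorem stmt2 (M NBS Nd L κM : ℕ) (hM : 0 < M) (hNBS : 0 < NBS) (hNd : 0 < Nd)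
    (hL : 0 < L) (hκM : 0 < κM)
    (AG : Matrix (Fin M) (Fin L) ℂ) (BG : Matrix (Fin NBS) (Fin L) ℂ)
    (Atil : Matrix (Fin κM) (Fin M) ℂ) (Λ : Fin L → ℝ) (hΛ : ∀ l, 0 ≤ Λ l)
    (γ : Fin κM → ℝ) (hγ : ∀ j, 0 ≤ γ j) (f : Fin κM → ℝ)
    (W : Matrix (Fin NBS) (Fin Nd) ℂ) (hW : W ≠ 0)
    (θ : Fin M → ℂ) :
    ∃ D : (Fin M → ℂ) →L[ℝ] ℝ,
      HasFDerivAt (fun θ' : Fin M → ℂ => costJ M NBS Nd L κM AG BG Atil Λ γ f W θ') D θ ∧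
        ∀ v : Fin M → ℂ,
          D v =
            2 * (∑ m : Fin M, (starRingEnd ℂ) (v m) *
              Matrix.diag
                ((2 * (M : ℝ) ^ 2 * NBS / frobSq W) •
                  (Atilᴴ * Matrix.diagonal (fun j => ((γ j) ^ 2 : ℂ)) *
                    Matrix.diagonal
                      (fun j => ((ybar M NBS Nd L κM AG BG Atil Λ W θ j - f j : ℝ) : ℂ)) *
                    Atil * Matrix.diagonal θ *
                    (AG *
                      Matrix.hadamard 1
                        (Matrix.diagonal (fun l => (Λ l : ℂ)) * BGᴴ * W * Wᴴ * BG) *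
                      AGᴴ))) m).re :=
  stmt2_general M NBS Nd L κM AG BG Atil Λ γ f W θ
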